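/- For every ξ ∈ (0,∞) and every v ∈ 𝒩 with χ_ξ·v ≠ 0 in L², one has F_ξ(v) > 0. Consequently the largest eigenvalue λ_ξ of A_ξ on the odd functions in L²(ℝ) is strictly positive. -/

import Mathlib

open MeasureTheory Filter Set

noncomputable section

/-- Convolution of two real functions on `ℝ`: `(a ∗ w)(x) = ∫ a(x − y) w(y) dy`. -/
def conv (a w : ℝ → ℝ) : ℝ → ℝ := fun x => ∫ y, a (x - y) * w y

/-- `χ_ξ`, the indicator function of the interval `I_ξ = [−ξ, ξ]`. -/
def chi (ξ : ℝ) : ℝ → ℝ := Set.indicator (Set.Icc (-ξ) ξ) (fun _ => (1 : ℝ))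

/-- The modified convolution operator `A_ξ v := χ_ξ · (a ∗ (χ_ξ · v))`. -/
def Axi (a : ℝ → ℝ) (ξ : ℝ) (v : ℝ → ℝ) : ℝ → ℝ :=
  fun x => chi ξ x * conv a (fun y => chi ξ y * v y) x

/-- The quadratic functional `F_ξ(v) := ½ ⟨χ_ξ·v, a ∗ (χ_ξ·v)⟩` in `L²(ℝ)`. -/
def Fxi (a : ℝ → ℝ) (ξ : ℝ) (v : ℝ → ℝ) : ℝ :=
  (1 / 2) * ∫ x, (chi ξ x * v x) * conv a (fun y => chi ξ y * v y) x

/-- Standing assumptions on the convolution kernel `a`: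
integrable, square integrable, bounded, even, nonnegative, nonincreasing on `[0,∞)`,
with total integral one. -/
structure KernelHyp (a : ℝ → ℝ) : Prop where
  integrable : Integrable a
  memL2 : MemLp a 2 volume
  bounded : ∃ C : ℝ, ∀ x, |a x| ≤ C
  even : ∀ x, a (-x) = a x
  nonneg : ∀ x, 0 ≤ a x
  antitone : AntitoneOn a (Set.Ici 0)
  mass_one : (∫ x, a x) = 1

/-- Strict unimodality: `a` is differentiable with `a′(x) < 0` for all `x > 0`. -/
def StrictKernel (a : ℝ → ℝ) : Prop :=
  Differentiable ℝ a ∧ ∀ x, 0 < x → deriv a x < 0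

/-- The cone `𝒰` of even, nonnegative, unimodal functions in `L²(ℝ)`. -/
def coneU (u : ℝ → ℝ) : Prop :=
  MemLp u 2 volume ∧ (∀ x, u (-x) = u x) ∧ (∀ x, 0 ≤ u x) ∧
    AntitoneOn u (Set.Ici 0)

/-- The cone `𝒩` of odd functions in `L²(ℝ)` that are nonpositive on `(0,∞)`. -/
def coneN (v : ℝ → ℝ) : Prop :=
  MemLp v 2 volume ∧ (∀ x, v (-x) = -v x) ∧ ∀ x, 0 < x → v x ≤ 0

/-- The refined cone `𝒩̃_ξ`: elements of `𝒩` that are `C¹` on `I_ξ`, with negative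
derivative at `0`, strictly negative on `(0, ξ]` and vanishing beyond `ξ`. -/
def coneNtilde (ξ : ℝ) (v : ℝ → ℝ) : Prop :=
  coneN v ∧ ContDiffOn ℝ 1 v (Set.Icc (-ξ) ξ) ∧ deriv v 0 < 0 ∧
    (∀ x, 0 < x → x ≤ ξ → v x < 0) ∧ ∀ x, ξ < x → v x = 0

/-- The set of Rayleigh quotients `2 F_ξ(v)` over normalized odd `v ∈ L²(ℝ)`. -/
def rayleighSet (a : ℝ → ℝ) (ξ : ℝ) : Set ℝ :=
  {l | ∃ v : ℝ → ℝ, MemLp v 2 volume ∧ (∀ x, v (-x) = -v x) ∧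
    (∫ x, (v x) ^ 2) = 1 ∧ l = 2 * Fxi a ξ v}

/-- `λ_ξ`, the largest eigenvalue of `A_ξ` on `L²_odd(ℝ)`, characterized variationally
as the supremum of the Rayleigh quotients. -/
def lamXi (a : ℝ → ℝ) (ξ : ℝ) : ℝ := sSup (rayleighSet a ξ)

/-- `convPow a k` is the `(k+1)`-fold convolution power `a^{∗(k+1)}`. -/
def convPow (a : ℝ → ℝ) : ℕ → (ℝ → ℝ)
  | 0 => a
  | (k + 1) => conv a (convPow a k)

/-- The transformed kernel `ã := (1 − μ) Σ_{k≥0} μ^k a^{∗(k+1)}`. -/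
def tildeKernel (a : ℝ → ℝ) (μ : ℝ) : ℝ → ℝ :=
  fun x => (1 - μ) * ∑' k : ℕ, μ ^ k * convPow a k x

/-- The bilinear nonlinearity `f(r) = ζ r + η max(r − θ, 0)`. -/
def bilin (ζ θ η r : ℝ) : ℝ := ζ * r + η * max (r - θ) 0

/-!
For odd `w = χ_ξ v`, folding the convolution integral onto `(0, ∞)` gives
`(a ∗ w)(x) = ∫_{y > 0} (a(x - y) - a(x + y)) w(y) dy`. For `x, y > 0` we have `|x - y| < x + y`,
so the bracket is strictly positive since `a` is even and strictly decreasing on `[0, ∞)`.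
As `w ≤ 0` on `(0, ∞)` and `w ≠ 0`, this makes `a ∗ w < 0` on all of `(0, ∞)`; by oddness
`w · (a ∗ w) ≥ 0` everywhere, with strict inequality where `w < 0` on `(0, ∞)`, a set of positive
measure. Hence `F_ξ(v) > 0`. For `λ_ξ`, the Rayleigh quotients are bounded by
`‖a‖_∞ ‖χ_ξ v‖₁²`, and the normalized odd step `(2ξ)^{-1/2} (𝟙_{[-ξ,0)} - 𝟙_{(0,ξ]})` lies in `𝒩`.
-/

section Chi

variable {ξ : ℝ} {v : ℝ → ℝ}

lemma chi_nonneg (ξ x : ℝ) : 0 ≤ chi ξ x :=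
  indicator_nonneg (fun _ _ => zero_le_one) x

lemma chi_le_one (ξ x : ℝ) : chi ξ x ≤ 1 := by
  unfold chi
  by_cases h : x ∈ Icc (-ξ) ξ <;> simp [h]

lemma chi_neg (ξ x : ℝ) : chi ξ (-x) = chi ξ x := by
  simp only [chi, indicator_apply, mem_Icc, neg_le_neg_iff, neg_le, and_comm]

lemma memLp_chi (ξ : ℝ) (p : ENNReal) : MemLp (chi ξ) p volume :=
  memLp_indicator_const p measurableSet_Icc 1 (Or.inr measure_Icc_lt_top.ne)

lemma integrable_chi (ξ : ℝ) : Integrable (chi ξ) :=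
  memLp_one_iff_integrable.1 (memLp_chi ξ 1)

lemma integral_chi (hξ : 0 ≤ ξ) : ∫ x, chi ξ x = 2 * ξ := by
  rw [chi, integral_indicator_const _ measurableSet_Icc, measureReal_def, Real.volume_Icc,
    ENNReal.toReal_ofReal (by linarith), smul_eq_mul, mul_one]
  ring

lemma MeasureTheory.MemLp.integrable_chi_mul (hv : MemLp v 2 volume) :
    Integrable (fun x => chi ξ x * v x) :=
  (memLp_chi ξ 2).integrable_mul hv

lemma integral_abs_chi_mul_le (hv : MemLp v 2 volume) (hξ : 0 ≤ ξ) :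
    ∫ x, |chi ξ x * v x| ≤ (2 * ξ + ∫ x, v x ^ 2) / 2 := by
  have hpoint : ∀ x, |chi ξ x * v x| ≤ (chi ξ x + v x ^ 2) / 2 := fun x => by
    have h0 := chi_nonneg ξ x
    have h1 := chi_le_one ξ x
    rw [abs_mul, abs_of_nonneg h0]
    nlinarith [sq_nonneg (chi ξ x - |v x|), sq_abs (v x), abs_nonneg (v x)]
  calc ∫ x, |chi ξ x * v x|
      ≤ ∫ x, (chi ξ x + v x ^ 2) / 2 :=
        integral_mono_of_nonneg (ae_of_all _ fun x => abs_nonneg _)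
          ((integrable_chi ξ).add hv.integrable_sq |>.div_const 2)
          (ae_of_all _ hpoint)
    _ = (2 * ξ + ∫ x, v x ^ 2) / 2 := by
        rw [integral_div, integral_add (integrable_chi ξ) hv.integrable_sq,
          integral_chi hξ]

end Chi

section Conv

variable {a w : ℝ → ℝ} {C : ℝ}

lemma integrable_kernel_mul (ha : Continuous a) (hC : ∀ x, |a x| ≤ C) (hw : Integrable w)
    (x : ℝ) : Integrable (fun y => a (x - y) * w y) :=
  hw.bdd_mul (by fun_prop : Continuous fun y => a (x - y)).aestronglyMeasurable
    (ae_of_all _ fun y => (hC (x - y)))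

lemma abs_conv_le (hC : ∀ x, |a x| ≤ C) (hw : Integrable w) (x : ℝ) :
    |conv a w x| ≤ C * ∫ y, |w y| :=
  calc |conv a w x| ≤ ∫ y, |a (x - y) * w y| := abs_integral_le_integral_abs
    _ ≤ ∫ y, C * |w y| :=
        integral_mono_of_nonneg (ae_of_all _ fun y => abs_nonneg _) (hw.abs.const_mul C)
          (ae_of_all _ fun y => by
            dsimp only; rw [abs_mul]; exact mul_le_mul_of_nonneg_right (hC _) (abs_nonneg _))
    _ = C * ∫ y, |w y| := integral_const_mul C _

lemma continuous_conv (ha : Continuous a) (hC : ∀ x, |a x| ≤ C) (hw : Integrable w) :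
    Continuous (conv a w) :=
  continuous_of_dominated (fun x => (integrable_kernel_mul ha hC hw x).aestronglyMeasurable)
    (fun x => ae_of_all _ fun y => by
      rw [norm_mul, Real.norm_eq_abs, Real.norm_eq_abs]
      exact mul_le_mul_of_nonneg_right (hC _) (abs_nonneg _))
    (hw.abs.const_mul C) (ae_of_all _ fun y => by fun_prop)

lemma integrable_mul_conv (ha : Continuous a) (hC : ∀ x, |a x| ≤ C) (hw : Integrable w) :
    Integrable (fun x => w x * conv a w x) :=
  hw.mul_bdd (continuous_conv ha hC hw).aestronglyMeasurable
    (ae_of_all _ fun x => abs_conv_le hC hw x)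

lemma integral_mul_conv_le (hC : ∀ x, |a x| ≤ C) (hw : Integrable w) :
    ∫ x, w x * conv a w x ≤ C * (∫ x, |w x|) ^ 2 :=
  calc ∫ x, w x * conv a w x ≤ ∫ x, |w x * conv a w x| :=
        (le_abs_self _).trans abs_integral_le_integral_abs
    _ ≤ ∫ x, |w x| * (C * ∫ y, |w y|) :=
        integral_mono_of_nonneg (ae_of_all _ fun x => abs_nonneg _) (hw.abs.mul_const _)
          (ae_of_all _ fun x => by
            dsimp only; rw [abs_mul]
            exact mul_le_mul_of_nonneg_left (abs_conv_le hC hw x) (abs_nonneg _))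
    _ = C * (∫ x, |w x|) ^ 2 := by rw [integral_mul_const]; ring

lemma conv_apply_neg (heven : a.Even) (hodd : w.Odd) (x : ℝ) :
    conv a w (-x) = -conv a w x := by
  rw [conv, conv, ← integral_neg_eq_self, ← integral_neg]
  congr 1 with y
  rw [show -x - -y = -(x - y) by ring, heven, hodd]
  ring

section Odd

variable (hodd : w.Odd)
include hodd

lemma integrable_kernel_sub_mul (ha : Continuous a) (hC : ∀ x, |a x| ≤ C) (hw : Integrable w)
    (x : ℝ) : Integrable (fun y => (a (x - y) - a (x + y)) * w y) := by
  refine ((integrable_kernel_mul ha hC hw x).add (integrable_kernel_mul ha hC hw x).comp_neg).congr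
    (ae_of_all _ fun y => ?_)
  simp only [Pi.add_apply, sub_neg_eq_add, hodd y]
  ring

lemma conv_eq_integral_Ioi (ha : Continuous a) (hC : ∀ x, |a x| ≤ C) (hw : Integrable w)
    (x : ℝ) : conv a w x = ∫ y in Ioi 0, (a (x - y) - a (x + y)) * w y := by
  have hg := integrable_kernel_mul ha hC hw x
  rw [conv, ← intervalIntegral.integral_Iic_add_Ioi hg.integrableOn hg.integrableOn,
    ← neg_zero, ← integral_comp_neg_Ioi, neg_zero, ← integral_add hg.comp_neg.integrableOn
    hg.integrableOn]
  congr 1 with y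
  simp only [sub_neg_eq_add, hodd y]
  ring

end Odd

end Conv

lemma StrictKernel.strictAntiOn {a : ℝ → ℝ} (hs : StrictKernel a) : StrictAntiOn a (Ici 0) :=
  strictAntiOn_of_deriv_neg (convex_Ici 0) hs.1.continuous.continuousOn
    (fun x hx => hs.2 x (by simpa using hx))

lemma apply_add_lt_apply_sub {a : ℝ → ℝ} (heven : a.Even) (hanti : StrictAntiOn a (Ici 0))
    {x y : ℝ} (hx : 0 < x) (hy : 0 < y) : a (x + y) < a (x - y) := by
  have habs : a (x - y) = a |x - y| := by
    rcases abs_choice (x - y) with h | h <;> rw [h]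
    exact (heven _).symm
  rw [habs]
  exact hanti (mem_Ici.2 (abs_nonneg _)) (mem_Ici.2 (by positivity))
    (abs_sub_lt_iff.2 ⟨by linarith, by linarith⟩)

section OddNonpos

variable {a w : ℝ → ℝ} {C : ℝ} (hodd : w.Odd) (hnonpos : ∀ x, 0 < x → w x ≤ 0)
include hodd hnonpos

lemma volume_setOf_pos_neg_ne_zero (hw : ¬ w =ᵐ[volume] 0) :
    volume {y | 0 < y ∧ w y < 0} ≠ 0 := by
  contrapose! hw
  refine ae_iff.2 (measure_mono_null (fun x hx => ?_)
    (measure_union_null hw ((Measure.measure_neg _ _).trans hw)))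
  rcases lt_trichotomy x 0 with hx0 | rfl | hx0
  · exact Or.inr ⟨neg_pos.2 hx0, (hnonpos _ (neg_pos.2 hx0)).lt_of_ne
      (by rw [hodd]; exact neg_ne_zero.2 hx)⟩
  · exact absurd hodd.map_zero hx
  · exact Or.inl ⟨hx0, (hnonpos x hx0).lt_of_ne hx⟩

variable (ha : Continuous a) (hC : ∀ x, |a x| ≤ C) (heven : a.Even)
  (hanti : StrictAntiOn a (Ici 0)) (hw : Integrable w)
include ha hC heven hanti hw

lemma conv_lt_zero (hA : volume {y | 0 < y ∧ w y < 0} ≠ 0) {x : ℝ} (hx : 0 < x) :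
    conv a w x < 0 := by
  have hker : ∀ y, 0 < y → 0 < a (x - y) - a (x + y) := fun y hy =>
    sub_pos.2 (apply_add_lt_apply_sub heven hanti hx hy)
  rw [conv_eq_integral_Ioi hodd ha hC hw, ← neg_pos, ← integral_neg,
    setIntegral_pos_iff_support_of_nonneg_ae
      (ae_restrict_of_forall_mem measurableSet_Ioi fun y hy =>
        neg_nonneg.2 (mul_nonpos_of_nonneg_of_nonpos (hker y hy).le (hnonpos y hy)))
      (integrable_kernel_sub_mul hodd ha hC hw x).neg.integrableOn]
  exact (pos_iff_ne_zero.2 hA).trans_le (measure_mono fun y ⟨hy, hwy⟩ =>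
    ⟨(neg_pos.2 (mul_neg_of_pos_of_neg (hker y hy) hwy)).ne', hy⟩)

lemma mul_conv_nonneg (hA : volume {y | 0 < y ∧ w y < 0} ≠ 0) (x : ℝ) :
    0 ≤ w x * conv a w x := by
  rcases lt_trichotomy x 0 with hx | rfl | hx
  · have h := mul_nonneg_of_nonpos_of_nonpos (hnonpos (-x) (neg_pos.2 hx))
      (conv_lt_zero hodd hnonpos ha hC heven hanti hw hA (neg_pos.2 hx)).le
    rwa [hodd, conv_apply_neg heven hodd, neg_mul_neg] at h
  · simp [hodd.map_zero]
  · exact mul_nonneg_of_nonpos_of_nonpos (hnonpos x hx)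
      (conv_lt_zero hodd hnonpos ha hC heven hanti hw hA hx).le

lemma integral_mul_conv_pos (hne : ¬ w =ᵐ[volume] 0) : 0 < ∫ x, w x * conv a w x := by
  have hA := volume_setOf_pos_neg_ne_zero hodd hnonpos hne
  rw [integral_pos_iff_support_of_nonneg
    (mul_conv_nonneg hodd hnonpos ha hC heven hanti hw hA) (integrable_mul_conv ha hC hw)]
  exact (pos_iff_ne_zero.2 hA).trans_le (measure_mono fun x ⟨hx, hwx⟩ =>
    (mul_pos_of_neg_of_neg hwx (conv_lt_zero hodd hnonpos ha hC heven hanti hw hA hx)).ne')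

end OddNonpos

lemma Fxi_pos {a v : ℝ → ℝ} {C ξ : ℝ} (ha : Continuous a) (hC : ∀ x, |a x| ≤ C)
    (heven : a.Even) (hanti : StrictAntiOn a (Ici 0)) (hv : coneN v)
    (hne : ¬ (fun x => chi ξ x * v x) =ᵐ[volume] 0) : 0 < Fxi a ξ v := by
  have hodd : (fun x => chi ξ x * v x).Odd := fun x => by
    simp only [chi_neg, hv.2.1 x, mul_neg]
  have hnonpos : ∀ x, 0 < x → chi ξ x * v x ≤ 0 := fun x hx =>
    mul_nonpos_of_nonneg_of_nonpos (chi_nonneg ξ x) (hv.2.2 x hx)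
  exact mul_pos one_half_pos
    (integral_mul_conv_pos hodd hnonpos ha hC heven hanti hv.1.integrable_chi_mul hne)

lemma bddAbove_rayleighSet {a : ℝ → ℝ} {C ξ : ℝ} (hC : ∀ x, |a x| ≤ C) (hξ : 0 ≤ ξ) :
    BddAbove (rayleighSet a ξ) := by
  refine ⟨C * (ξ + 1 / 2) ^ 2, ?_⟩
  rintro _ ⟨v, hv, -, hnorm, rfl⟩
  have hL1 := integral_abs_chi_mul_le hv hξ
  rw [hnorm] at hL1
  have hC0 : 0 ≤ C := (abs_nonneg _).trans (hC 0)
  calc 2 * Fxi a ξ v = ∫ x, chi ξ x * v x * conv a (fun y => chi ξ y * v y) x := by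
        rw [Fxi]; ring
    _ ≤ C * (∫ x, |chi ξ x * v x|) ^ 2 := integral_mul_conv_le hC hv.integrable_chi_mul
    _ ≤ C * (ξ + 1 / 2) ^ 2 := by
        gcongr
        linarith

def oddStep (ξ x : ℝ) : ℝ := (Ioc 0 ξ).indicator 1 (-x) - (Ioc 0 ξ).indicator 1 x

section OddStep

variable {ξ : ℝ}

lemma oddStep_odd : (oddStep ξ).Odd := fun x => by
  simp only [oddStep, neg_neg, neg_sub]

lemma memLp_oddStep (p : ENNReal) : MemLp (oddStep ξ) p volume := by
  have hg : MemLp ((Ioc 0 ξ).indicator 1) p volume :=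
    memLp_indicator_const p measurableSet_Ioc (1 : ℝ) (Or.inr measure_Ioc_lt_top.ne)
  exact (hg.comp_measurePreserving (Measure.measurePreserving_neg volume)).sub hg

lemma oddStep_nonpos {x : ℝ} (hx : 0 < x) : oddStep ξ x ≤ 0 := by
  have hneg : -x ∉ Ioc 0 ξ := fun h => by linarith [h.1]
  rw [oddStep, indicator_of_notMem hneg, zero_sub, neg_nonpos]
  exact indicator_nonneg (fun _ _ => zero_le_one' ℝ) x

lemma oddStep_sq (x : ℝ) :
    oddStep ξ x ^ 2 = (Ioc 0 ξ).indicator 1 (-x) + (Ioc 0 ξ).indicator 1 x := by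
  simp only [oddStep, indicator_apply, mem_Ioc, Pi.one_apply]
  split_ifs with h₁ h₂ <;> first | linarith [h₁.1, h₂.1] | norm_num

lemma integral_oddStep_sq (hξ : 0 ≤ ξ) : ∫ x, oddStep ξ x ^ 2 = 2 * ξ := by
  have hg : Integrable ((Ioc 0 ξ).indicator (1 : ℝ → ℝ)) :=
    memLp_one_iff_integrable.1 (memLp_indicator_const 1 measurableSet_Ioc (1 : ℝ)
      (Or.inr measure_Ioc_lt_top.ne))
  simp_rw [oddStep_sq]
  rw [integral_add hg.comp_neg hg, integral_neg_eq_self, integral_indicator_one measurableSet_Ioc,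
    measureReal_def, Real.volume_Ioc, ENNReal.toReal_ofReal (by linarith)]
  ring

lemma chi_mul_const_mul_oddStep_not_ae_zero (hξ : 0 < ξ) {c : ℝ} (hc : c ≠ 0) :
    ¬ (fun x => chi ξ x * (c * oddStep ξ x)) =ᵐ[volume] 0 := by
  have hpos : volume (Ioc 0 ξ) ≠ 0 := by simpa [Real.volume_Ioc] using hξ
  refine fun h => hpos (measure_mono_null (fun x (hx : x ∈ Ioc 0 ξ) => ?_) (ae_iff.1 h))
  have hchi : chi ξ x = 1 :=
    indicator_of_mem (show x ∈ Icc (-ξ) ξ from ⟨by linarith [hx.1], hx.2⟩) _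
  have hneg : -x ∉ Ioc 0 ξ := fun h => by linarith [h.1, hx.1]
  simp [hchi, oddStep, indicator_of_notMem hneg, indicator_of_mem hx, hc]

lemma exists_coneN_integral_sq_eq_one (hξ : 0 < ξ) :
    ∃ v, coneN v ∧ ∫ x, v x ^ 2 = 1 ∧ ¬ (fun x => chi ξ x * v x) =ᵐ[volume] 0 := by
  set c := (√(2 * ξ))⁻¹
  have hc : 0 < c := by positivity
  refine ⟨fun x => c * oddStep ξ x, ⟨(memLp_oddStep 2).const_mul c, fun x => ?_,
    fun x hx => mul_nonpos_of_nonneg_of_nonpos hc.le (oddStep_nonpos hx)⟩, ?_,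
    chi_mul_const_mul_oddStep_not_ae_zero hξ hc.ne'⟩
  · show c * oddStep ξ (-x) = -(c * oddStep ξ x)
    rw [oddStep_odd x, mul_neg]
  · simp_rw [mul_pow]
    rw [integral_const_mul, integral_oddStep_sq hξ.le, inv_pow, Real.sq_sqrt (by positivity)]
    exact inv_mul_cancel₀ (by positivity)

end OddStep

/-- For every `ξ ∈ (0,∞)` and every `v ∈ 𝒩` with `χ_ξ·v ≠ 0` in `L²`,
one has `F_ξ(v) > 0`. Consequently the largest eigenvalue `λ_ξ` of `A_ξ` on the odd
functions in `L²(ℝ)` is strictly positive. -/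
theorem stmt4 (a : ℝ → ℝ) (hk : KernelHyp a) (hs : StrictKernel a)
    (ξ : ℝ) (hξ : 0 < ξ) :
    (∀ v : ℝ → ℝ, coneN v →
      ¬ ((fun x => chi ξ x * v x) =ᵐ[volume] (0 : ℝ → ℝ)) → 0 < Fxi a ξ v) ∧
    0 < lamXi a ξ := by
  obtain ⟨C, hC⟩ := hk.bounded
  have hF : ∀ v : ℝ → ℝ, coneN v →
      ¬ ((fun x => chi ξ x * v x) =ᵐ[volume] (0 : ℝ → ℝ)) → 0 < Fxi a ξ v :=
    fun v hv hne => Fxi_pos hs.1.continuous hC hk.even hs.strictAntiOn hv hne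
  refine ⟨hF, ?_⟩
  obtain ⟨v, hv, hnorm, hne⟩ := exists_coneN_integral_sq_eq_one hξ
  have hmem : 2 * Fxi a ξ v ∈ rayleighSet a ξ := ⟨v, hv.1, hv.2.1, hnorm, rfl⟩
  exact (mul_pos two_pos (hF v hv hne)).trans_le
    (le_csSup (bddAbove_rayleighSet hC hξ.le) hmem)
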